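/- Let A, B be bounded linear operators on a Hilbert space H with R(A) ∩ R(B) = {0}. Then R(A+B) = R(A) + R(B) if and only if N(A) + N(B) = H. -/

import Mathlib

/-!
If `ker A + ker B = H`, split `x = a + b` with `A a = 0 = B b`; then `A x = (A + B) b` and
`B x = (A + B) a`, so both ranges lie in `R(A + B)`. Conversely, if `A x = (A + B) y` then
`A (x - y) = B y` lies in `R(A) ∩ R(B) = 0`, so `x = (x - y) + y ∈ ker A + ker B`.
-/

namespace LinearMap

variable {R M N : Type*} [Ring R] [AddCommGroup M] [AddCommGroup N] [Module R M] [Module R N]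

theorem range_le_range_add_of_ker_sup_eq_top {f g : M →ₗ[R] N} (hK : ker f ⊔ ker g = ⊤) :
    range f ≤ range (f + g) := by
  rintro _ ⟨x, rfl⟩
  obtain ⟨a, ha, b, hb, rfl⟩ := Submodule.mem_sup.1 (hK ▸ Submodule.mem_top : x ∈ ker f ⊔ ker g)
  refine ⟨b, ?_⟩
  simp only [add_apply, map_add, mem_ker.1 ha, mem_ker.1 hb, zero_add, add_zero]

theorem range_add_eq_sup_of_ker_sup_eq_top {f g : M →ₗ[R] N} (hK : ker f ⊔ ker g = ⊤) :
    range (f + g) = range f ⊔ range g := by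
  refine le_antisymm (range_add_le f g) (sup_le (range_le_range_add_of_ker_sup_eq_top hK) ?_)
  rw [add_comm]
  exact range_le_range_add_of_ker_sup_eq_top (sup_comm (ker f) (ker g) ▸ hK)

theorem ker_sup_eq_top_of_range_le_range_add {f g : M →ₗ[R] N}
    (hd : Disjoint (range f) (range g)) (hle : range f ≤ range (f + g)) :
    ker f ⊔ ker g = ⊤ := by
  refine eq_top_iff.2 fun x _ => ?_
  obtain ⟨y, hy⟩ := hle (mem_range_self f x)
  have hfg : f (x - y) = g y := by
    rw [map_sub, ← hy, add_apply]
    abel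
  have hgy : g y = 0 :=
    (Submodule.disjoint_def.1 hd) _ ⟨x - y, hfg⟩ (mem_range_self g y)
  exact Submodule.mem_sup.2 ⟨x - y, hfg.trans hgy, y, hgy, sub_add_cancel x y⟩

theorem range_add_eq_sup_iff_ker_sup_eq_top {f g : M →ₗ[R] N}
    (hd : Disjoint (range f) (range g)) :
    range (f + g) = range f ⊔ range g ↔ ker f ⊔ ker g = ⊤ :=
  ⟨fun hR => ker_sup_eq_top_of_range_le_range_add hd (hR ▸ le_sup_left),
    range_add_eq_sup_of_ker_sup_eq_top⟩

end LinearMap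

open ContinuousLinearMap

variable {H : Type*} [NormedAddCommGroup H] [InnerProductSpace ℂ H] [CompleteSpace H]

/-- If `R(A) ∩ R(B) = {0}`, then `R(A+B) = R(A) + R(B)` iff `N(A) + N(B) = H`. -/
theorem range_additivity_iff_ker_sum (A B : H →L[ℂ] H)
    (h : LinearMap.range (A : H →ₗ[ℂ] H) ⊓ LinearMap.range (B : H →ₗ[ℂ] H) = ⊥) :
    LinearMap.range ((A + B : H →L[ℂ] H) : H →ₗ[ℂ] H) =
      LinearMap.range (A : H →ₗ[ℂ] H) ⊔ LinearMap.range (B : H →ₗ[ℂ] H) ↔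
      LinearMap.ker (A : H →ₗ[ℂ] H) ⊔ LinearMap.ker (B : H →ₗ[ℂ] H) = ⊤ := by
  rw [toLinearMap_add]
  exact LinearMap.range_add_eq_sup_iff_ker_sup_eq_top (disjoint_iff.2 h)
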